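/- (Finsler's lemma) For symmetric matrices A, B ∈ R^{n×n}, the following are equivalent: (i) for every nonzero x with x^T B x = 0 one has x^T A x > 0; (ii) there exists μ ∈ R such that A + μB is positive definite. -/

import Mathlib

/-!
Write `r x = -Q₁ x / Q₂ x`. A multiplier `μ` works iff `r x < μ` wherever `Q₂ x > 0` and
`μ < r y` wherever `Q₂ y < 0`. On the unit sphere the hypothesis keeps `Q₂` away from `0` on the
part where `r` is large, so by compactness `r` attains its supremum `a` over `{Q₂ > 0}`, at `z` say.
If `Q₁ y + a Q₂ y ≤ 0` for some `y` with `Q₂ y < 0`, then (after replacing `y` by `-y`) the form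
`Q₁ + a Q₂` is `≤ 0` on the whole segment `[z, y]`, and the intermediate value theorem yields a
nonzero `w` on it with `Q₂ w = 0` and `Q₁ w ≤ 0`, which is excluded. Doing the same for `-Q₂` and
averaging the two multipliers gives a strict one.
-/

open Metric

namespace QuadraticMap

variable {V : Type*}

theorem continuous_of_finiteDimensional [NormedAddCommGroup V] [NormedSpace ℝ V]
    [FiniteDimensional ℝ V] (Q : QuadraticForm ℝ V) : Continuous Q := by
  let B : V →ₗ[ℝ] V →L[ℝ] ℝ :=
    LinearMap.toContinuousLinearMap.toLinearMap ∘ₗ QuadraticMap.associated Q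
  convert B.continuous_of_finiteDimensional.clm_apply continuous_id with x
  exact (associated_eq_self_apply ℝ Q x).symm

theorem posDef_of_pos_on_unit_sphere [NormedAddCommGroup V] [NormedSpace ℝ V]
    (Q : QuadraticForm ℝ V) (h : ∀ u ∈ sphere (0 : V) 1, 0 < Q u) : Q.PosDef := by
  intro x hx
  have hu := h (‖x‖⁻¹ • x) (by simp [norm_smul, hx])
  rw [QuadraticMap.map_smul, smul_eq_mul] at hu
  exact pos_of_mul_pos_right hu (by positivity)

variable [AddCommGroup V] [Module ℝ V]

theorem apply_smul_add_smul (Q : QuadraticForm ℝ V) (a b : ℝ) (x y : V) :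
    Q (a • x + b • y) = a ^ 2 * Q x + a * b * polar Q x y + b ^ 2 * Q y := by
  rw [QuadraticMap.map_add (⇑Q), QuadraticMap.map_smul, QuadraticMap.map_smul, polar_smul_left,
    polar_smul_right, smul_eq_mul, smul_eq_mul, smul_eq_mul, smul_eq_mul]
  ring

theorem exists_isotropic_nonpos_of_pos_of_neg (Q C : QuadraticForm ℝ V) {x y : V}
    (hx : 0 < Q x) (hy : Q y < 0) (hCx : C x ≤ 0) (hCy : C y ≤ 0) :
    ∃ w ≠ 0, Q w = 0 ∧ C w ≤ 0 := by
  -- with a nonpositive cross term, `C` is nonpositive on the whole segment `[x, y]`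
  obtain ⟨y, hy, hCy, hpolar⟩ : ∃ y', Q y' < 0 ∧ C y' ≤ 0 ∧ polar C x y' ≤ 0 := by
    rcases le_total (polar C x y) 0 with h | h
    · exact ⟨y, hy, hCy, h⟩
    · refine ⟨-y, ?_, ?_, ?_⟩ <;> simpa [polar_neg_right]
  have hcont : Continuous fun t : ℝ => Q ((1 - t) • x + t • y) := by
    simp only [apply_smul_add_smul]
    fun_prop
  obtain ⟨t, ⟨ht0, ht1⟩, hQt⟩ := intermediate_value_Icc' zero_le_one hcont.continuousOn
    ⟨by simpa using hy.le, by simpa using hx.le⟩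
  refine ⟨(1 - t) • x + t • y, fun h0 => ?_, hQt, ?_⟩
  · have h := congrArg Q (eq_neg_of_add_eq_zero_left h0)
    rw [QuadraticMap.map_neg, QuadraticMap.map_smul, QuadraticMap.map_smul, smul_eq_mul,
      smul_eq_mul] at h
    have hQx : (1 - t) * (1 - t) * Q x = 0 := by
      nlinarith [mul_nonneg (mul_self_nonneg (1 - t)) hx.le,
        mul_nonneg (mul_self_nonneg t) (neg_nonneg.2 hy.le)]
    have ht : t = 1 := by
      have := mul_self_eq_zero.1 ((mul_eq_zero.1 hQx).resolve_right hx.ne')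
      linarith
    rw [hQx, ht] at h
    linarith
  · rw [apply_smul_add_smul]
    nlinarith [mul_nonneg (sub_nonneg.2 ht1) ht0, sq_nonneg t, sq_nonneg (1 - t)]

end QuadraticMap

namespace Finsler

variable {V : Type*} [NormedAddCommGroup V] [NormedSpace ℝ V] [FiniteDimensional ℝ V]
  {Q₁ Q₂ : QuadraticForm ℝ V}

theorem exists_tight_multiplier (h : ∀ x ≠ 0, Q₂ x = 0 → 0 < Q₁ x) {x₀ : V}
    (hx₀ : x₀ ∈ sphere (0 : V) 1) (hQx₀ : 0 < Q₂ x₀) :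
    ∃ a : ℝ, (∃ z, 0 < Q₂ z ∧ Q₁ z + a * Q₂ z = 0) ∧
      ∀ x ∈ sphere (0 : V) 1, 0 < Q₂ x → 0 ≤ Q₁ x + a * Q₂ x := by
  have hQ₁ := Q₁.continuous_of_finiteDimensional
  have hQ₂ := Q₂.continuous_of_finiteDimensional
  set c₀ := -Q₁ x₀ / Q₂ x₀
  set K := sphere (0 : V) 1 ∩ {x | Q₁ x + c₀ * Q₂ x ≤ 0} ∩ {x | 0 ≤ Q₂ x}
  have hK : IsCompact K :=
    ((isCompact_sphere 0 1).inter_right (isClosed_le (by fun_prop) continuous_const)).inter_right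
      (isClosed_le continuous_const hQ₂)
  have hx₀K : x₀ ∈ K := ⟨⟨hx₀, by simp [c₀, div_mul_cancel₀ _ hQx₀.ne']⟩, hQx₀.le⟩
  have hKpos : ∀ x ∈ K, 0 < Q₂ x := by
    rintro x ⟨⟨hxS, hxC : Q₁ x + c₀ * Q₂ x ≤ 0⟩, hx⟩
    refine hx.lt_of_ne' fun h0 => ?_
    have := h x (ne_zero_of_mem_unit_sphere ⟨x, hxS⟩) h0
    rw [h0, mul_zero, add_zero] at hxC
    linarith
  obtain ⟨z, hzK, hzmax⟩ := hK.exists_isMaxOn ⟨x₀, hx₀K⟩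
    (hQ₁.neg.continuousOn.div hQ₂.continuousOn fun x hx => (hKpos x hx).ne')
  have hz := hKpos z hzK
  refine ⟨-Q₁ z / Q₂ z, ⟨z, hz, by field_simp; ring⟩, fun x hxS hx => ?_⟩
  have hc₀ : c₀ ≤ -Q₁ z / Q₂ z := hzmax hx₀K
  by_cases hxC : Q₁ x + c₀ * Q₂ x ≤ 0
  · have : -Q₁ x / Q₂ x ≤ -Q₁ z / Q₂ z := hzmax ⟨⟨hxS, hxC⟩, hx.le⟩
    rw [div_le_iff₀ hx] at this
    linarith
  · nlinarith [mul_le_mul_of_nonneg_right hc₀ hx.le]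

theorem exists_multiplier_of_exists_pos (h : ∀ x ≠ 0, Q₂ x = 0 → 0 < Q₁ x) {x₀ : V}
    (hx₀ : x₀ ∈ sphere (0 : V) 1) (hQx₀ : 0 < Q₂ x₀) :
    ∃ a : ℝ, ∀ x ∈ sphere (0 : V) 1,
      0 ≤ Q₁ x + a * Q₂ x ∧ (Q₂ x ≤ 0 → 0 < Q₁ x + a * Q₂ x) := by
  obtain ⟨a, ⟨z, hz, hCz⟩, ha⟩ := exists_tight_multiplier h hx₀ hQx₀
  have hneg : ∀ y, Q₂ y < 0 → 0 < Q₁ y + a * Q₂ y := by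
    intro y hy
    by_contra! hCy
    obtain ⟨w, hw, hQw, hCw⟩ :=
      QuadraticMap.exists_isotropic_nonpos_of_pos_of_neg Q₂ (Q₁ + a • Q₂) hz hy
        (by simpa using hCz.le) (by simpa using hCy)
    have := h w hw hQw
    simp only [add_apply, smul_apply, hQw, smul_zero, add_zero] at hCw
    linarith
  refine ⟨a, fun x hxS => ?_⟩
  rcases lt_trichotomy (Q₂ x) 0 with hx | hx | hx
  · exact ⟨(hneg x hx).le, fun _ => hneg x hx⟩
  · have := h x (ne_zero_of_mem_unit_sphere ⟨x, hxS⟩) hx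
    simp only [hx, mul_zero, add_zero]
    exact ⟨this.le, fun _ => this⟩
  · exact ⟨ha x hxS hx, fun hx' => absurd hx' hx.not_ge⟩

theorem exists_multiplier_of_nonpos (h : ∀ x ≠ 0, Q₂ x = 0 → 0 < Q₁ x)
    (hQ₂ : ∀ x ∈ sphere (0 : V) 1, Q₂ x ≤ 0) :
    ∃ a : ℝ, ∀ x ∈ sphere (0 : V) 1, 0 < Q₁ x + a * Q₂ x := by
  by_cases hN : ∃ x₀ ∈ sphere (0 : V) 1, Q₂ x₀ < 0
  · obtain ⟨x₀, hx₀, hQx₀⟩ := hN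
    obtain ⟨b, -, hb⟩ := exists_tight_multiplier (Q₂ := -Q₂) (by simpa using h) hx₀
      (by simpa using hQx₀)
    refine ⟨-b - 1, fun x hxS => ?_⟩
    rcases (hQ₂ x hxS).lt_or_eq with hx | hx
    · have := hb x hxS (by simpa using hx)
      simp only [neg_apply] at this
      linarith
    · simpa [hx] using h x (ne_zero_of_mem_unit_sphere ⟨x, hxS⟩) hx
  · push Not at hN
    exact ⟨0, fun x hxS => by
      simpa using h x (ne_zero_of_mem_unit_sphere ⟨x, hxS⟩) (le_antisymm (hQ₂ x hxS) (hN x hxS))⟩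

theorem exists_multiplier (h : ∀ x ≠ 0, Q₂ x = 0 → 0 < Q₁ x) :
    ∃ a : ℝ, ∀ x ∈ sphere (0 : V) 1,
      0 ≤ Q₁ x + a * Q₂ x ∧ (Q₂ x ≤ 0 → 0 < Q₁ x + a * Q₂ x) := by
  by_cases hP : ∃ x₀ ∈ sphere (0 : V) 1, 0 < Q₂ x₀
  · obtain ⟨x₀, hx₀, hQx₀⟩ := hP
    exact exists_multiplier_of_exists_pos h hx₀ hQx₀
  · push Not at hP
    obtain ⟨a, ha⟩ := exists_multiplier_of_nonpos h hP
    exact ⟨a, fun x hxS => ⟨(ha x hxS).le, fun _ => ha x hxS⟩⟩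

end Finsler

namespace QuadraticForm

variable {V : Type*} [NormedAddCommGroup V] [NormedSpace ℝ V] [FiniteDimensional ℝ V]

theorem pos_on_isotropic_iff_exists_posDef_add_smul (Q₁ Q₂ : QuadraticForm ℝ V) :
    (∀ x ≠ 0, Q₂ x = 0 → 0 < Q₁ x) ↔ ∃ μ : ℝ, (Q₁ + μ • Q₂).PosDef := by
  refine ⟨fun h => ?_, fun ⟨μ, hμ⟩ x hx hQx => by simpa [hQx] using hμ x hx⟩
  obtain ⟨a, ha⟩ := Finsler.exists_multiplier h
  obtain ⟨b, hb⟩ := Finsler.exists_multiplier (Q₂ := -Q₂) (by simpa using h)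
  -- averaging the multipliers for `Q₂` and `-Q₂`: on each side of `Q₂ = 0` one of them is strict
  refine ⟨(a - b) / 2, QuadraticMap.posDef_of_pos_on_unit_sphere _ fun u hu => ?_⟩
  obtain ⟨ha₀, ha₁⟩ := ha u hu
  obtain ⟨hb₀, hb₁⟩ := hb u hu
  simp only [neg_apply, neg_nonpos, mul_neg] at hb₀ hb₁
  rw [add_apply, smul_apply, smul_eq_mul]
  rcases le_total (Q₂ u) 0 with hu' | hu'
  · linarith [ha₁ hu']
  · linarith [hb₁ hu']

end QuadraticForm

open Matrix

theorem stmt1 {n : ℕ} (A B : Matrix (Fin n) (Fin n) ℝ) :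
    (∀ x : Fin n → ℝ, x ≠ 0 → x ⬝ᵥ B.mulVec x = 0 → 0 < x ⬝ᵥ A.mulVec x) ↔
    (∃ μ : ℝ, ∀ x : Fin n → ℝ, x ≠ 0 → 0 < x ⬝ᵥ (A + μ • B).mulVec x) := by
  have hQ (M : Matrix (Fin n) (Fin n) ℝ) (x : Fin n → ℝ) : M.toQuadraticForm' x = x ⬝ᵥ M *ᵥ x :=
    toLinearMap₂'_apply' M x x
  simpa [QuadraticMap.PosDef, hQ, add_mulVec, smul_mulVec] using
    QuadraticForm.pos_on_isotropic_iff_exists_posDef_add_smul A.toQuadraticForm' B.toQuadraticForm'
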